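/- Let m ≥ 1, let ν > 0, let (a_{ij}) be a real symmetric m × m matrix with a_{ij} > 0 for all i, j such that the matrix (a_{ij}^{−2}) is conditionally negative definite, and let (σ_{ij}) be a real symmetric m × m matrix such that the matrix with entries σ_{ij} a_{ij}^{−3} is positive semidefinite. Then for every λ ≥ 0, the m × m matrix with entries σ_{ij} a_{ij}^{2ν} (a_{ij}² + λ²)^{−(ν + 3/2)} is positive semidefinite. -/

import Mathlib

/-!
With `θᵢⱼ = l² aᵢⱼ⁻²` and `s = ν + 3/2`, each entry factors as
`(σᵢⱼ aᵢⱼ⁻³) · (1 + θᵢⱼ)^(-s)`, so by the Schur product theorem it suffices that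
`((1 + θᵢⱼ)^(-s))` is positive semidefinite. The Gamma integral
`Γ(s) (1 + θ)^(-s) = ∫₀^∞ t^(s-1) e^(-t) e^(-tθ) dt` reduces this to Schoenberg's theorem: for a
conditionally negative definite `θ` every `(e^(-uθᵢⱼ))`, `u ≥ 0`, is positive semidefinite. That
holds because `θᵢz + θzⱼ - θᵢⱼ - θzz` is positive semidefinite for any base point `z`, and entrywise
exponentials of positive semidefinite matrices are positive semidefinite (power series and Schur).
-/

open Matrix Real

def CondNegDef {m : ℕ} (Θ : Matrix (Fin m) (Fin m) ℝ) : Prop :=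
  ∀ c : Fin m → ℝ, (∑ i, c i) = 0 → (∑ i, ∑ j, c i * c j * Θ i j) ≤ 0

open MeasureTheory Set
open scoped ComplexOrder Nat

namespace Matrix

variable {ι : Type*} [Fintype ι]

theorem PosSemidef.map_pow {𝕜 : Type*} [RCLike 𝕜] {A : Matrix ι ι 𝕜} (hA : A.PosSemidef)
    (n : ℕ) : (A.map (· ^ n)).PosSemidef := by
  induction n with
  | zero =>
    convert posSemidef_vecMulVec_self_star (fun _ : ι => (1 : 𝕜)) using 1
    ext i j
    simp [vecMulVec]
  | succ n ih =>
    convert ih.hadamard hA using 1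
    ext i j
    simp [pow_succ]

theorem PosSemidef.map_exp {A : Matrix ι ι ℝ} (hA : A.PosSemidef) :
    (A.map Real.exp).PosSemidef := by
  refine .of_dotProduct_mulVec_nonneg (hA.isHermitian.map _ fun _ => rfl) fun x => ?_
  have hsum : HasSum (fun n : ℕ => star x ⬝ᵥ (((n ! : ℝ)⁻¹ • A.map (· ^ n)) *ᵥ x))
      (star x ⬝ᵥ (A.map Real.exp *ᵥ x)) := by
    simp only [dotProduct, mulVec, Matrix.smul_apply, map_apply, smul_eq_mul]
    refine hasSum_sum fun i _ => .mul_left _ <| hasSum_sum fun j _ => .mul_right _ ?_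
    simpa [Real.exp_eq_exp_ℝ, div_eq_inv_mul] using NormedSpace.expSeries_div_hasSum_exp (A i j)
  exact hsum.nonneg fun n => ((hA.map_pow n).smul (by positivity)).dotProduct_mulVec_nonneg x

theorem posSemidef_entrywise_integral_of_ae {α : Type*} [MeasurableSpace α] {μ : Measure α}
    {F : α → Matrix ι ι ℝ} (hint : ∀ i j, Integrable (fun t => F t i j) μ)
    (hF : ∀ᵐ t ∂μ, (F t).PosSemidef) : (of fun i j => ∫ t, F t i j ∂μ).PosSemidef := by
  refine .of_dotProduct_mulVec_nonneg ?_ fun x => ?_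
  · rw [isHermitian_iff_isSymm]
    refine IsSymm.ext fun i j => integral_congr_ae ?_
    filter_upwards [hF] with t ht
    exact (isHermitian_iff_isSymm.1 ht.isHermitian).apply i j
  · have hquad : star x ⬝ᵥ ((of fun i j => ∫ t, F t i j ∂μ) *ᵥ x) =
        ∫ t, star x ⬝ᵥ (F t *ᵥ x) ∂μ := by
      simp only [star_trivial, dotProduct, mulVec, of_apply]
      rw [integral_finsetSum _ fun i _ =>
        (integrable_finsetSum _ fun j _ => (hint i j).mul_const _).const_mul _]
      refine Finset.sum_congr rfl fun i _ => ?_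
      rw [integral_const_mul, integral_finsetSum _ fun j _ => (hint i j).mul_const _]
      simp only [integral_mul_const]
    rw [hquad]
    exact integral_nonneg_of_ae (hF.mono fun t ht => ht.dotProduct_mulVec_nonneg x)

end Matrix

namespace CondNegDef

variable {m : ℕ} {θ : Matrix (Fin m) (Fin m) ℝ}

theorem smul (hθ : CondNegDef θ) {c : ℝ} (hc : 0 ≤ c) : CondNegDef (c • θ) := fun x hx => by
  simp only [Matrix.smul_apply, smul_eq_mul, mul_left_comm _ c, ← Finset.mul_sum]
  exact mul_nonpos_of_nonneg_of_nonpos hc (hθ x hx)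

theorem posSemidef_basepoint (hsymm : θ.IsSymm) (hθ : CondNegDef θ) (z : Fin m) :
    (of fun i j => θ i z + θ z j - θ i j - θ z z).PosSemidef := by
  refine .of_dotProduct_mulVec_nonneg ?_ fun x => ?_
  · rw [isHermitian_iff_isSymm]
    refine IsSymm.ext fun i j => ?_
    simp only [of_apply, hsymm.apply]
    ring
  · set s := ∑ i, x i
    -- `x - Pi.single z s` sums to zero, and its `θ`-form is minus the form of `x` below.
    have hc := hθ (x - Pi.single z s) (by simp [Finset.sum_sub_distrib, s])
    simp only [Pi.sub_apply, Pi.single_apply, sub_mul, mul_sub, ite_mul, mul_ite, zero_mul,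
      mul_zero, Finset.sum_sub_distrib, Finset.sum_ite_eq', Finset.sum_ite_irrel,
      Finset.sum_const_zero, Finset.mem_univ, if_true, mul_assoc, ← Finset.mul_sum] at hc
    have hq : star x ⬝ᵥ ((of fun i j => θ i z + θ z j - θ i j - θ z z) *ᵥ x) =
        ∑ i, ∑ j, (x i * θ i z * x j + x i * (x j * θ z j) - x i * (x j * θ i j)
          - x i * x j * θ z z) := by
      simp only [star_trivial, dotProduct, mulVec, of_apply, Finset.mul_sum]
      exact Finset.sum_congr rfl fun i _ => Finset.sum_congr rfl fun j _ => by ring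
    simp only [Finset.sum_add_distrib, Finset.sum_sub_distrib, ← Finset.sum_mul,
      ← Finset.mul_sum] at hq
    have hr : ∑ i, x i * (s * θ i z) = (∑ i, x i * θ i z) * s := by
      rw [Finset.sum_mul]
      exact Finset.sum_congr rfl fun i _ => by ring
    linarith

theorem posSemidef_map_exp_neg_mul (hsymm : θ.IsSymm) (hθ : CondNegDef θ) {u : ℝ}
    (hu : 0 ≤ u) : (θ.map fun t => exp (-(u * t))).PosSemidef := by
  rcases isEmpty_or_nonempty (Fin m) with _ | ⟨⟨z⟩⟩
  · rw [Subsingleton.elim (θ.map _) 0]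
    exact .zero
  have hN := ((hθ.posSemidef_basepoint hsymm z).smul hu).map_exp
  have hd := posSemidef_vecMulVec_self_star fun i => exp (-(u * θ i z))
  have heq : θ.map (fun t => exp (-(u * t))) = exp (u * θ z z) •
      (vecMulVec (fun i => exp (-(u * θ i z))) (star fun i => exp (-(u * θ i z))) ⊙
        (u • of fun i j => θ i z + θ z j - θ i j - θ z z).map exp) := by
    ext i j
    simp only [map_apply, Matrix.smul_apply, hadamard_apply, vecMulVec_apply, star_trivial,
      of_apply, smul_eq_mul, ← exp_add, hsymm.apply z j]
    ring_nf
  rw [heq]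
  exact (hd.hadamard hN).smul (exp_pos _).le

theorem posSemidef_map_one_add_rpow_neg (hsymm : θ.IsSymm) (hθ : CondNegDef θ)
    (hpos : ∀ i j, 0 < 1 + θ i j) {s : ℝ} (hs : 0 < s) :
    (θ.map fun t => (1 + t) ^ (-s)).PosSemidef := by
  set F : ℝ → Matrix (Fin m) (Fin m) ℝ :=
    fun t => θ.map fun r => t ^ (s - 1) * exp (-((1 + r) * t))
  have hint : ∀ i j, Integrable (fun t => F t i j) (volume.restrict (Ioi 0)) := fun i j => by
    refine (integrableOn_rpow_mul_exp_neg_mul_rpow (s := s - 1) (by linarith) one_pos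
      (hpos i j)).congr_fun (fun t _ => ?_) measurableSet_Ioi
    simp only [F, map_apply, rpow_one, neg_mul]
  have hF : ∀ᵐ t ∂(volume.restrict (Ioi 0)), (F t).PosSemidef := by
    filter_upwards [ae_restrict_mem measurableSet_Ioi] with t (ht : 0 < t)
    have hexp := (hθ.posSemidef_map_exp_neg_mul hsymm ht.le).smul
      (by positivity : 0 ≤ t ^ (s - 1) * exp (-t))
    convert hexp using 1
    ext i j
    simp only [F, map_apply, Matrix.smul_apply, smul_eq_mul, mul_assoc, ← exp_add]
    ring_nf
  have hint_psd := (posSemidef_entrywise_integral_of_ae hint hF).smul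
    (inv_nonneg.2 (Gamma_pos_of_pos hs).le)
  convert hint_psd using 1
  ext i j
  simp only [F, map_apply, Matrix.smul_apply, of_apply, smul_eq_mul,
    integral_rpow_mul_exp_neg_mul_Ioi hs (hpos i j)]
  rw [one_div, inv_rpow (hpos i j).le, ← rpow_neg (hpos i j).le,
    mul_comm, mul_inv_cancel_right₀ (Gamma_pos_of_pos hs).ne']

end CondNegDef

theorem rpow_two_mul_mul_sq_add_rpow_neg {p x : ℝ} (hp : 0 < p) (hx : 0 ≤ x) (ν : ℝ) :
    p ^ (2 * ν) * (p ^ 2 + x) ^ (-(ν + 3 / 2)) =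
      p ^ (-3 : ℝ) * (1 + x * p ^ (-2 : ℝ)) ^ (-(ν + 3 / 2)) := by
  have hfactor : 1 + x * p ^ (-2 : ℝ) = (p ^ 2 + x) * p ^ (-2 : ℝ) := by
    rw [rpow_neg hp.le, rpow_two]
    field_simp
  rw [hfactor, mul_rpow (by positivity) (by positivity), ← rpow_mul hp.le, mul_left_comm,
    ← rpow_add hp]
  ring_nf

theorem flexible_matern_valid_A2b_general
    (m : ℕ) (ν : ℝ) (hν : 0 < ν)
    (a : Matrix (Fin m) (Fin m) ℝ) (hasym : a.IsSymm) (hapos : ∀ i j, 0 < a i j)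
    (hacnd : CondNegDef (Matrix.of (fun i j => a i j ^ (-2 : ℝ) :
      Matrix (Fin m) (Fin m) ℝ)))
    (σ : Matrix (Fin m) (Fin m) ℝ)
    (hσ : (Matrix.of (fun i j => σ i j * a i j ^ (-3 : ℝ) :
      Matrix (Fin m) (Fin m) ℝ)).PosSemidef) :
    ∀ l : ℝ, 0 ≤ l →
      (Matrix.of (fun i j =>
        σ i j * a i j ^ (2 * ν) * (a i j ^ 2 + l ^ 2) ^ (-(ν + 3/2)) :
        Matrix (Fin m) (Fin m) ℝ)).PosSemidef := by
  intro l _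
  set θ : Matrix (Fin m) (Fin m) ℝ := l ^ 2 • of fun i j => a i j ^ (-2 : ℝ)
  have hθ : CondNegDef θ := hacnd.smul (sq_nonneg l)
  have hsymm : θ.IsSymm := (hasym.map (· ^ (-2 : ℝ))).smul (l ^ 2)
  have hpos (i j : Fin m) : 0 < 1 + θ i j := by
    have := hapos i j
    simp only [θ, Matrix.smul_apply, of_apply, smul_eq_mul]
    positivity
  have hB := hθ.posSemidef_map_one_add_rpow_neg hsymm hpos (by linarith : 0 < ν + 3 / 2)
  have heq : (of fun i j => σ i j * a i j ^ (2 * ν) * (a i j ^ 2 + l ^ 2) ^ (-(ν + 3 / 2))) =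
      (of fun i j => σ i j * a i j ^ (-3 : ℝ)) ⊙ θ.map fun t => (1 + t) ^ (-(ν + 3 / 2)) := by
    ext i j
    simp only [θ, of_apply, hadamard_apply, map_apply, Matrix.smul_apply, smul_eq_mul, mul_assoc,
      rpow_two_mul_mul_sq_add_rpow_neg (hapos i j) (sq_nonneg l), mul_comm (l ^ 2)]
  rw [heq]
  exact hσ.hadamard hB

/-- Validity condition A2(b) for the flexible multivariate Matérn
model with common smoothness `ν`: if `(a_{ij}^{−2})` is conditionally negative
definite and `(σ_{ij} a_{ij}^{−3})` is positive semidefinite, then the matrix of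
Matérn spectral densities is positive semidefinite at every `λ ≥ 0`. -/
theorem flexible_matern_valid_A2b
    (m : ℕ) (hm : 1 ≤ m) (ν : ℝ) (hν : 0 < ν)
    (a : Matrix (Fin m) (Fin m) ℝ) (hasym : a.IsSymm) (hapos : ∀ i j, 0 < a i j)
    (hacnd : CondNegDef (Matrix.of (fun i j => a i j ^ (-2 : ℝ) :
      Matrix (Fin m) (Fin m) ℝ)))
    (σ : Matrix (Fin m) (Fin m) ℝ) (hσsym : σ.IsSymm)
    (hσ : (Matrix.of (fun i j => σ i j * a i j ^ (-3 : ℝ) :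
      Matrix (Fin m) (Fin m) ℝ)).PosSemidef) :
    ∀ l : ℝ, 0 ≤ l →
      (Matrix.of (fun i j =>
        σ i j * a i j ^ (2 * ν) * (a i j ^ 2 + l ^ 2) ^ (-(ν + 3/2)) :
        Matrix (Fin m) (Fin m) ℝ)).PosSemidef :=
  flexible_matern_valid_A2b_general m ν hν a hasym hapos hacnd σ hσ
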